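/- Let Ω ∈ (0, π] and let N be a natural number. Then for every y ∈ ℂ^{2N+1}, Σ_{t∈ℤ} |(Ω/π) · Σ_{k=-N}^{N} y_k · sinc(kπ + Ωt)|² = (Ω/π) · Σ_{k=-N}^{N} |y_k|²; in particular the sampling map y ↦ ((Qy)(t))_{t∈ℤ} is, up to the factor √(Ω/π), an isometry from ℂ^{2N+1} into ℓ²(ℤ). -/

import Mathlib

open scoped BigOperators

/-- `sinc x = sin x / x` for `x ≠ 0`, and `sinc 0 = 1`. -/
noncomputable def sinc (x : ℝ) : ℝ := if x = 0 then 1 else Real.sin x / x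

/-- The band-limited sequence determined by coefficients `y = (y_k)_{k=-N}^N`
(indexed by `Fin (2N+1)` via `k ↦ k - N`):
`(Qy)(t) = (Ω/π) ∑_{k=-N}^N y_k sinc(kπ + Ωt)`. -/
noncomputable def Qmap (Ω : ℝ) (N : ℕ) (y : Fin (2 * N + 1) → ℂ) (t : ℤ) : ℂ :=
  ((Ω / Real.pi : ℝ) : ℂ) *
    ∑ k : Fin (2 * N + 1),
      y k * ((sinc ((((k : ℤ) : ℝ) - (N : ℝ)) * Real.pi + Ω * (t : ℝ))) : ℂ)

/-!
Up to the reflection `t ↦ -t`, `Qy` is the sequence of Fourier coefficients on `(-π, π]` of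
the trigonometric polynomial `h x = ∑ₖ y_k e^{i (k - N) π x / Ω}` cut off to `(-Ω, Ω]`,
because `∫_{-Ω}^{Ω} e^{i c x} dx = 2Ω sinc (c Ω)`. The frequencies of `h` differ by nonzero
multiples of `π / Ω`, so its exponentials are orthogonal on `[-Ω, Ω]` and
`∫_{-Ω}^{Ω} |h|² = 2Ω ∑ₖ |y_k|²`. Parseval's identity on `(-π, π]` then gives the claim.
-/

open MeasureTheory Complex Set
open scoped ComplexConjugate

theorem sinc_eq_real_sinc : sinc = Real.sinc := rfl

theorem Real.sinc_intCast_mul_pi {j : ℤ} (hj : j ≠ 0) : Real.sinc (j * Real.pi) = 0 := by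
  rw [Real.sinc_of_ne_zero (mul_ne_zero (Int.cast_ne_zero.mpr hj) Real.pi_ne_zero),
    Real.sin_int_mul_pi, zero_div]

theorem integral_exp_ofReal_mul_I_eq_sinc (c a : ℝ) :
    ∫ x in -a..a, exp (↑(c * x) * I) = 2 * a * Real.sinc (c * a) := by
  rcases eq_or_ne c 0 with rfl | hc
  · simp only [zero_mul, ofReal_zero, exp_zero, intervalIntegral.integral_const,
      sub_neg_eq_add, real_smul, ofReal_add, mul_one, Real.sinc_zero, ofReal_one]
    ring
  · have h := intervalIntegral.integral_comp_mul_left (fun x : ℝ => exp (↑x * I)) hc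
      (a := -a) (b := a)
    rw [mul_neg, integral_exp_mul_I_eq_sinc] at h
    rw [h]
    have : (c : ℂ) ≠ 0 := by exact_mod_cast hc
    simp only [ofReal_mul, real_smul, ofReal_inv]
    field_simp

theorem intervalIntegral_indicator_Ioc {E : Type*} [NormedAddCommGroup E] [NormedSpace ℝ E]
    {f : ℝ → E} {a b c d : ℝ} (hac : a ≤ c) (hcd : c ≤ d) (hdb : d ≤ b) :
    ∫ x in a..b, (Ioc c d).indicator f x = ∫ x in c..d, f x := by
  rw [intervalIntegral.integral_of_le (hac.trans (hcd.trans hdb)),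
    intervalIntegral.integral_of_le hcd, integral_indicator measurableSet_Ioc,
    Measure.restrict_restrict measurableSet_Ioc, inter_eq_left.mpr (Ioc_subset_Ioc hac hdb)]

section TrigPoly

variable {ι : Type*} [Fintype ι] (ω : ι → ℝ) (y : ι → ℂ)

noncomputable def trigPoly (x : ℝ) : ℂ := ∑ k, y k * exp (↑(ω k * x) * I)

theorem continuous_trigPoly : Continuous (trigPoly ω y) := by
  unfold trigPoly
  fun_prop

theorem norm_trigPoly_le (x : ℝ) : ‖trigPoly ω y x‖ ≤ ∑ k, ‖y k‖ :=
  (norm_sum_le _ _).trans <| Finset.sum_le_sum fun k _ => by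
    rw [norm_mul, norm_exp_ofReal_mul_I, mul_one]

theorem conj_trigPoly (x : ℝ) :
    conj (trigPoly ω y x) = ∑ k, conj (y k) * exp (↑(-ω k * x) * I) := by
  simp only [trigPoly, map_sum, map_mul, ← exp_conj, conj_ofReal, conj_I, neg_mul, ofReal_neg,
    mul_neg]

theorem integral_exp_mul_trigPoly (ν a : ℝ) :
    ∫ x in -a..a, exp (↑(-ν * x) * I) * trigPoly ω y x
      = 2 * a * ∑ k, y k * Real.sinc ((ω k - ν) * a) := by
  have hsplit : ∀ x : ℝ, exp (↑(-ν * x) * I) * trigPoly ω y x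
      = ∑ k, y k * exp (↑((ω k - ν) * x) * I) := by
    intro x
    simp only [trigPoly, Finset.mul_sum]
    refine Finset.sum_congr rfl fun k _ => ?_
    rw [mul_left_comm, ← exp_add]
    push_cast
    ring_nf
  simp_rw [hsplit]
  rw [intervalIntegral.integral_finsetSum fun k _ => by
    apply Continuous.intervalIntegrable; fun_prop]
  simp_rw [intervalIntegral.integral_const_mul, integral_exp_ofReal_mul_I_eq_sinc, Finset.mul_sum]
  refine Finset.sum_congr rfl fun k _ => ?_
  ring

theorem integral_norm_sq_trigPoly (a : ℝ) :
    ((∫ x in -a..a, ‖trigPoly ω y x‖ ^ 2 : ℝ) : ℂ)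
      = 2 * a * ∑ l, conj (y l) * ∑ k, y k * Real.sinc ((ω k - ω l) * a) := by
  have hsplit : ∀ x : ℝ, ((‖trigPoly ω y x‖ ^ 2 : ℝ) : ℂ)
      = ∑ l, conj (y l) * (exp (↑(-ω l * x) * I) * trigPoly ω y x) := by
    intro x
    rw [ofReal_pow, ← mul_conj', mul_comm, conj_trigPoly, Finset.sum_mul]
    simp only [mul_assoc]
  rw [← intervalIntegral.integral_ofReal]
  simp_rw [hsplit]
  rw [intervalIntegral.integral_finsetSum fun l _ => by
    apply Continuous.intervalIntegrable; have := continuous_trigPoly ω y; fun_prop]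
  simp_rw [intervalIntegral.integral_const_mul, integral_exp_mul_trigPoly, Finset.mul_sum]
  refine Finset.sum_congr rfl fun l _ => Finset.sum_congr rfl fun k _ => ?_
  ring

theorem integral_norm_sq_trigPoly_of_pairwise {a : ℝ}
    (horth : Pairwise fun k l => Real.sinc ((ω k - ω l) * a) = 0) :
    ∫ x in -a..a, ‖trigPoly ω y x‖ ^ 2 = 2 * a * ∑ k, ‖y k‖ ^ 2 := by
  have hdiag : ∀ l, ∑ k, y k * Real.sinc ((ω k - ω l) * a) = y l := fun l => by
    rw [Finset.sum_eq_single l (fun k _ hkl => by rw [horth hkl]; simp) (by simp)]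
    simp
  apply ofReal_injective
  rw [integral_norm_sq_trigPoly]
  simp_rw [hdiag, conj_mul']
  push_cast
  rfl

end TrigPoly

section Window

variable {ι : Type*} [Fintype ι] (ω : ι → ℝ) (y : ι → ℂ) {Ω : ℝ}

theorem fourierCoeffOn_indicator_trigPoly (hΩ₀ : 0 ≤ Ω) (hΩπ : Ω ≤ Real.pi) (n : ℤ) :
    fourierCoeffOn (neg_lt_self Real.pi_pos) ((Ioc (-Ω) Ω).indicator (trigPoly ω y)) n
      = (Ω / Real.pi : ℝ) * ∑ k, y k * Real.sinc ((ω k - n) * Ω) := by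
  have hfourier : ∀ x : ℝ, fourier (-n) (x : AddCircle (Real.pi - -Real.pi))
      = exp (↑(-(n : ℝ) * x) * I) := fun x => by
    rw [fourier_coe_apply]
    congr 1
    push_cast
    field_simp
    ring
  have hwindow : ∀ x : ℝ, fourier (-n) (x : AddCircle (Real.pi - -Real.pi))
        • (Ioc (-Ω) Ω).indicator (trigPoly ω y) x
      = (Ioc (-Ω) Ω).indicator (fun x => exp (↑(-(n : ℝ) * x) * I) * trigPoly ω y x) x :=
    fun x => by
      by_cases hx : x ∈ Ioc (-Ω) Ω <;> simp [hx, hfourier]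
  simp_rw [fourierCoeffOn_eq_integral, hwindow]
  rw [intervalIntegral_indicator_Ioc (by linarith) (by linarith) hΩπ,
    integral_exp_mul_trigPoly, real_smul, ← mul_assoc]
  congr 1
  push_cast
  field_simp
  ring

theorem hasSum_sq_fourierCoeffOn_indicator_trigPoly (hΩ₀ : 0 ≤ Ω) (hΩπ : Ω ≤ Real.pi)
    (horth : Pairwise fun k l => Real.sinc ((ω k - ω l) * Ω) = 0) :
    HasSum
      (fun n => ‖fourierCoeffOn (neg_lt_self Real.pi_pos)
        ((Ioc (-Ω) Ω).indicator (trigPoly ω y)) n‖ ^ 2)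
      (Ω / Real.pi * ∑ k, ‖y k‖ ^ 2) := by
  have hL2 : MemLp ((Ioc (-Ω) Ω).indicator (trigPoly ω y)) 2
      (volume.restrict (Ioc (-Real.pi) Real.pi)) :=
    (MemLp.of_bound (continuous_trigPoly ω y).aestronglyMeasurable _
      (ae_of_all _ (norm_trigPoly_le ω y))).indicator measurableSet_Ioc
  have hnorm : ∀ x, ‖(Ioc (-Ω) Ω).indicator (trigPoly ω y) x‖ ^ 2
      = (Ioc (-Ω) Ω).indicator (fun x => ‖trigPoly ω y x‖ ^ 2) x := fun x => by
    by_cases hx : x ∈ Ioc (-Ω) Ω <;> simp [hx]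
  convert hasSum_sq_fourierCoeffOn (neg_lt_self Real.pi_pos) hL2 using 1
  simp_rw [hnorm]
  rw [intervalIntegral_indicator_Ioc (by linarith) (by linarith) hΩπ,
    integral_norm_sq_trigPoly_of_pairwise ω y horth, smul_eq_mul]
  field_simp
  ring

end Window

section Sampling

variable {Ω : ℝ} {N : ℕ}

noncomputable def samplingFreq (Ω : ℝ) (N : ℕ) (k : Fin (2 * N + 1)) : ℝ :=
  (((k : ℤ) : ℝ) - N) * Real.pi / Ω

theorem pairwise_sinc_samplingFreq_eq_zero (hΩ : Ω ≠ 0) :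
    Pairwise fun k l => Real.sinc ((samplingFreq Ω N k - samplingFreq Ω N l) * Ω) = 0 := by
  intro k l hkl
  have hdiff : (samplingFreq Ω N k - samplingFreq Ω N l) * Ω
      = (((k : ℤ) - l : ℤ) : ℝ) * Real.pi := by
    simp only [samplingFreq]
    field_simp
    push_cast
    ring
  rw [hdiff]
  exact Real.sinc_intCast_mul_pi
    (sub_ne_zero.mpr (by exact_mod_cast Fin.val_injective.ne hkl))

theorem Qmap_eq_fourierCoeffOn (hΩ₀ : 0 < Ω) (hΩπ : Ω ≤ Real.pi) (y : Fin (2 * N + 1) → ℂ)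
    (t : ℤ) :
    Qmap Ω N y t = fourierCoeffOn (neg_lt_self Real.pi_pos)
      ((Ioc (-Ω) Ω).indicator (trigPoly (samplingFreq Ω N) y)) (-t) := by
  rw [fourierCoeffOn_indicator_trigPoly _ y hΩ₀.le hΩπ, Qmap, sinc_eq_real_sinc]
  refine congrArg _ (Finset.sum_congr rfl fun k _ => ?_)
  congr 3
  simp only [samplingFreq]
  field_simp
  push_cast
  ring

end Sampling

/-- Parseval-type identity for the sampling map: for every coefficient vector `y`,
`∑_{t∈ℤ} |(Qy)(t)|² = (Ω/π) ∑_{k=-N}^N |y_k|²`; up to the factor `√(Ω/π)`, the map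
`y ↦ (Qy(t))_{t∈ℤ}` is an isometry into `ℓ²(ℤ)`. -/
theorem sampling_map_parseval
    (Ω : ℝ) (hΩ : Ω ∈ Set.Ioc 0 Real.pi) (N : ℕ) (y : Fin (2 * N + 1) → ℂ) :
    Summable (fun t : ℤ => ‖Qmap Ω N y t‖ ^ 2) ∧
    ∑' t : ℤ, ‖Qmap Ω N y t‖ ^ 2 =
      (Ω / Real.pi) * ∑ k : Fin (2 * N + 1), ‖y k‖ ^ 2 := by
  obtain ⟨hΩ₀, hΩπ⟩ := hΩ
  have h := (Equiv.neg ℤ).hasSum_iff.mpr <| hasSum_sq_fourierCoeffOn_indicator_trigPoly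
    (samplingFreq Ω N) y hΩ₀.le hΩπ (pairwise_sinc_samplingFreq_eq_zero hΩ₀.ne')
  simp only [Function.comp_def, Equiv.neg_apply, ← Qmap_eq_fourierCoeffOn hΩ₀ hΩπ] at h
  exact ⟨h.summable, h.tsum_eq⟩
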